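/- Let B, Bᵘ, Bⁿ be fixed n×n real matrices, Δt > 0, and for u, n ∈ ℝ set A(u) = B + u Bᵘ + n Bⁿ (n fixed). Then the map u ↦ e^{A(u)Δt} is differentiable and ∂/∂u e^{A(u)Δt} = ∫₀^{Δt} e^{A(u) t} Bᵘ e^{A(u)(Δt − t)} dt. -/

import Mathlib

/-!
Duhamel's formula `e^{TM} - e^{TN} = ∫₀^T e^{tM} (M - N) e^{(T-t)N} dt` is the fundamental theorem
of calculus for `t ↦ e^{tM} e^{(T-t)N}`. Applied to `M = A(v)`, `N = A(u)`, where
`A(v) - A(u) = (v - u) Bᵘ`, it writes `e^{T A(v)} - e^{T A(u)} = (v - u) G(v)` with `G` continuous,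
so the difference quotient at `u` tends to `G(u)`, the claimed integral.
-/

open Matrix NormedSpace

theorem hasDerivAt_exp_smul_mul_exp_sub_smul {𝕂 𝔸 : Type*} [RCLike 𝕂] [NormedRing 𝔸]
    [NormedAlgebra 𝕂 𝔸] [CompleteSpace 𝔸] (M N : 𝔸) (T t : 𝕂) :
    HasDerivAt (fun s : 𝕂 => exp (s • M) * exp ((T - s) • N))
      (exp (t • M) * (M - N) * exp ((T - t) • N)) t := by
  have hN : HasDerivAt (fun s : 𝕂 => exp ((T - s) • N)) (-(N * exp ((T - t) • N))) t := by
    simpa [Function.comp_def] using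
      (hasDerivAt_exp_smul_const' (𝕂 := 𝕂) N (T - t)).scomp t ((hasDerivAt_id t).const_sub T)
  refine ((hasDerivAt_exp_smul_const M t).mul hN).congr_deriv ?_
  simp only [sub_eq_add_neg, mul_add, add_mul, mul_neg, neg_mul, mul_assoc]

theorem hasDerivAt_of_sub_eq_smul {𝕜 E : Type*} [NontriviallyNormedField 𝕜]
    [NormedAddCommGroup E] [NormedSpace 𝕜 E] {f g : 𝕜 → E} {u : 𝕜}
    (hfg : ∀ v, f v - f u = (v - u) • g v) (hg : ContinuousAt g u) :
    HasDerivAt f (g u) u := by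
  refine hasDerivAt_iff_tendsto_slope.mpr ((hg.tendsto.mono_left nhdsWithin_le_nhds).congr' ?_)
  filter_upwards [self_mem_nhdsWithin] with v hv
  rw [slope_def_module, hfg, smul_smul, inv_mul_cancel₀ (sub_ne_zero.mpr hv), one_smul]

namespace Matrix

variable {m : Type*} [Fintype m] [DecidableEq m]

/- These facts only involve the topology of `Matrix m m ℝ`, so they can be proved with a
submultiplicative norm and then used with the entrywise norm. -/
attribute [local instance] Matrix.linftyOpNormedRing Matrix.linftyOpNormedAlgebra

@[fun_prop]
theorem continuous_exp : Continuous (exp : Matrix m m ℝ → Matrix m m ℝ) :=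
  exp_continuous

theorem hasDerivAt_exp_smul_mul_exp_sub_smul (M N : Matrix m m ℝ) (T t : ℝ) :
    HasDerivAt (fun s : ℝ => exp (s • M) * exp ((T - s) • N))
      (exp (t • M) * (M - N) * exp ((T - t) • N)) t :=
  _root_.hasDerivAt_exp_smul_mul_exp_sub_smul M N T t

end Matrix

attribute [local instance] Matrix.normedAddCommGroup Matrix.normedSpace

namespace Matrix

variable {m : Type*} [Fintype m] [DecidableEq m]

theorem exp_smul_sub_exp_smul_eq_integral (M N : Matrix m m ℝ) (T : ℝ) :
    exp (T • M) - exp (T • N)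
      = ∫ t in (0 : ℝ)..T, exp (t • M) * (M - N) * exp ((T - t) • N) := by
  have hcont : Continuous fun t : ℝ => exp (t • M) * (M - N) * exp ((T - t) • N) := by
    fun_prop
  rw [intervalIntegral.integral_eq_sub_of_hasDerivAt
    (fun t _ => hasDerivAt_exp_smul_mul_exp_sub_smul M N T t) (hcont.intervalIntegrable 0 T)]
  simp

theorem hasDerivAt_exp_smul_add_smul (M P : Matrix m m ℝ) (T u : ℝ) :
    HasDerivAt (fun v : ℝ => exp (T • (M + v • P)))
      (∫ t in (0 : ℝ)..T, exp (t • (M + u • P)) * P * exp ((T - t) • (M + u • P))) u := by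
  refine hasDerivAt_of_sub_eq_smul
    (g := fun v => ∫ t in (0 : ℝ)..T, exp (t • (M + v • P)) * P * exp ((T - t) • (M + u • P)))
    (fun v => ?_) (Continuous.continuousAt ?_)
  · have hdiff : M + v • P - (M + u • P) = (v - u) • P := by rw [sub_smul]; abel
    simp only [exp_smul_sub_exp_smul_eq_integral, hdiff, mul_smul_comm, smul_mul_assoc,
      intervalIntegral.integral_smul]
  · exact intervalIntegral.continuous_parametric_intervalIntegral_of_continuous' (by fun_prop) 0 T

end Matrix

theorem deriv_exp_affine_control_general {d : ℕ} (B Bu Bn : Matrix (Fin d) (Fin d) ℝ)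
    (Δt : ℝ) (n : ℝ) (u : ℝ) :
    HasDerivAt (fun v : ℝ => exp (Δt • (B + v • Bu + n • Bn)))
      (∫ t in (0:ℝ)..Δt,
        exp (t • (B + u • Bu + n • Bn)) * Bu *
          exp ((Δt - t) • (B + u • Bu + n • Bn))) u := by
  simpa only [add_right_comm B] using Matrix.hasDerivAt_exp_smul_add_smul (B + n • Bn) Bu Δt u

/-- For `A(u) = B + u Bᵘ + n Bⁿ` (affine in the scalar control `u`, with `n` fixed) and
`Δt > 0`, the map `u ↦ e^{A(u)Δt}` is differentiable and
`∂/∂u e^{A(u)Δt} = ∫₀^{Δt} e^{A(u) t} Bᵘ e^{A(u)(Δt − t)} dt`. -/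
theorem deriv_exp_affine_control {d : ℕ} (B Bu Bn : Matrix (Fin d) (Fin d) ℝ)
    (Δt : ℝ) (hΔt : 0 < Δt) (n : ℝ) (u : ℝ) :
    HasDerivAt (fun v : ℝ => exp (Δt • (B + v • Bu + n • Bn)))
      (∫ t in (0:ℝ)..Δt,
        exp (t • (B + u • Bu + n • Bn)) * Bu *
          exp ((Δt - t) • (B + u • Bu + n • Bn))) u :=
  deriv_exp_affine_control_general B Bu Bn Δt n u
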